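/- Let x ∈ ℝ^{n_0} be a regular vertex, (l,j) ∈ C(x), and s, s' ∈ S^C(x) two compatible activation patterns with s_{lj} = s'_{lj}. Then the corresponding feasible axes coincide: ã_{x,s,l,j} = ã_{x,s',l,j}. -/

import Mathlib

/-!
Formalization of the setting of "Deep ReLU Programming" (Hinz & van de Geer).

A feed-forward ReLU network with `L` hidden layers and widths `n 0, …, n (L+1)`
(`n (L+1) = 1` for a real-valued network) is encoded by the structure `Net L n`
below, where `W k : Matrix (Fin (n (k+1))) (Fin (n k)) ℝ` and
`b k : Fin (n (k+1)) → ℝ` are the weight matrix and bias vector of layer `k+1`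
(so the paper's `W_l, b_l` correspond to `W (l-1), b (l-1)` here).

A neuron `(l, j)` of the paper (layer `l ∈ {1, …, L}`, neuron `j`) is encoded as
the pair `⟨k, j⟩ : Idx n` with `k = l - 1`; membership in the index set `I`
corresponds to the condition `k < L`.
-/

noncomputable section
open Metric Filter Topology
open scoped Classical RealInnerProductSpace BigOperators

namespace DRLP

/-- Input space `ℝ^{n 0}` with the Euclidean metric and inner product. -/
abbrev Input (n : ℕ → ℕ) := EuclideanSpace ℝ (Fin (n 0))

/-- Patterns: one real number for each neuron `⟨k, j⟩` (neuron `j` of layer `k+1`). -/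
abbrev Pat (n : ℕ → ℕ) := ∀ k : ℕ, Fin (n (k+1)) → ℝ

/-- Neuron indices: `⟨k, j⟩` denotes neuron `j` of layer `k+1`. -/
abbrev Idx (n : ℕ → ℕ) := Σ k : ℕ, Fin (n (k+1))

/-- `s` is an activation pattern (element of `S = {0,1}^{n_1} × ⋯ × {0,1}^{n_L}`). -/
def IsPattern (L : ℕ) {n : ℕ → ℕ} (s : Pat n) : Prop :=
  ∀ k < L, ∀ j, s k j = 0 ∨ s k j = 1

/-- Compatibility of a (hyperplane) pattern `h` with an activation pattern `s`:
`h_{lj} (s_{lj} - 0.5) ≥ 0` for all neurons `(l,j) ∈ I`. -/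
def PatCompatible (L : ℕ) {n : ℕ → ℕ} (h s : Pat n) : Prop :=
  ∀ k < L, ∀ j, h k j * (s k j - 1/2) ≥ 0

/-- A feed-forward ReLU network with `L` hidden layers and widths `n 0, …, n (L+1)`. -/
structure Net (L : ℕ) (n : ℕ → ℕ) : Type where
  W : ∀ k : ℕ, Matrix (Fin (n (k+1))) (Fin (n k)) ℝ
  b : ∀ k : ℕ, Fin (n (k+1)) → ℝ

namespace Net

variable {L : ℕ} {n : ℕ → ℕ} (N : Net L n)

/-- Output of layer `k` (entrywise ReLU applied); layer `0` is the input itself. -/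
def hid (x : Input n) : (k : ℕ) → Fin (n k) → ℝ
  | 0 => fun i => x i
  | k + 1 => fun j => max ((N.W k).mulVec (hid x k) j + N.b k j) 0

/-- The ReLU arguments `A(x)`: pre-activation of neuron `j` in layer `k+1`. -/
def preact (x : Input n) (k : ℕ) (j : Fin (n (k+1))) : ℝ :=
  (N.W k).mulVec (N.hid x k) j + N.b k j

/-- The hyperplane pattern `H(x) = sign.(A(x))`. -/
def Hpat (x : Input n) (k : ℕ) (j : Fin (n (k+1))) : ℝ :=
  Real.sign (N.preact x k j)

/-- Subjective hidden layers: activations frozen to the pattern `s`. -/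
def shid (s : Pat n) (x : Input n) : (k : ℕ) → Fin (n k) → ℝ
  | 0 => fun i => x i
  | k + 1 => fun j => s k j * ((N.W k).mulVec (shid s x k) j + N.b k j)

/-- The subjective ReLU arguments `Ã_s(x)`. -/
def spreact (s : Pat n) (x : Input n) (k : ℕ) (j : Fin (n (k+1))) : ℝ :=
  (N.W k).mulVec (N.shid s x k) j + N.b k j

/-- The subjective hyperplane pattern `H̃_s(x) = sign.(Ã_s(x))`. -/
def sHpat (s : Pat n) (x : Input n) (k : ℕ) (j : Fin (n (k+1))) : ℝ :=
  Real.sign (N.spreact s x k j)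

/-- `S^C(x)`: activation patterns compatible with the hyperplane pattern `H(x)`. -/
def SC (x : Input n) : Set (Pat n) :=
  {s | IsPattern L s ∧ PatCompatible L (N.Hpat x) s}

/-- `S̃^C(x)`: activation patterns compatible with their own induced subjective
hyperplane pattern `H̃_s(x)`. -/
def SCtilde (x : Input n) : Set (Pat n) :=
  {s | IsPattern L s ∧ PatCompatible L (N.sHpat s x) s}

/-- `C(x)`: critical indices, i.e. neurons whose hyperplane pattern is non-constant in
every neighbourhood of `x`. -/
def Critical (x : Input n) (p : Idx n) : Prop :=
  p.1 < L ∧ ∀ ε > 0, ∃ y z : Input n, dist y x < ε ∧ dist z x < ε ∧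
    N.Hpat y p.1 p.2 ≠ N.Hpat z p.1 p.2

/-- `C̃_s(x)`: subjective critical indices. -/
def sCritical (s : Pat n) (x : Input n) (p : Idx n) : Prop :=
  p.1 < L ∧ ∀ ε > 0, ∃ y z : Input n, dist y x < ε ∧ dist z x < ε ∧
    N.sHpat s y p.1 p.2 ≠ N.sHpat s z p.1 p.2

/-- The critical kernel `Ker^C(x)`. -/
def KerC (x : Input n) : Set (Input n) :=
  {v | ∃ ε > 0, ∀ t : ℝ, |t| < ε → ∀ p : Idx n, p.1 < L →
    N.Hpat (x + t • v) p.1 p.2 = N.Hpat x p.1 p.2}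

/-- The subjective critical kernel `K̃er^C_s(x)`. -/
def sKerC (s : Pat n) (x : Input n) : Set (Input n) :=
  {v | ∃ ε > 0, ∀ t : ℝ, |t| < ε → ∀ p : Idx n, p.1 < L →
    N.sHpat s (x + t • v) p.1 p.2 = N.sHpat s x p.1 p.2}

/-- Critical degrees of freedom `df^C(x) = dim Ker^C(x)`. -/
def dfC (x : Input n) : ℕ :=
  Module.finrank ℝ (Submodule.span ℝ (N.KerC x))

/-- `x` is a vertex iff `df^C(x) = 0`. -/
def IsVertex (x : Input n) : Prop := N.dfC x = 0

/-- The matrix `W_{k+1} diag(s_k) W_k ⋯ diag(s_1) W_1`. -/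
def sMat (s : Pat n) : (k : ℕ) → Matrix (Fin (n (k+1))) (Fin (n 0)) ℝ
  | 0 => N.W 0
  | k + 1 => N.W (k+1) * Matrix.diagonal (s k) * sMat s k

/-- The normal vector `ṽ_{s,l,j}` (transpose of the `j`-th row of
`W_l diag(s_{l-1}) ⋯ diag(s_1) W_1`). -/
def nvec (s : Pat n) (p : Idx n) : Input n :=
  WithLp.toLp 2 (fun i => N.sMat s p.1 p.2 i)

/-- The oriented normal vector `ũ_{s,l,j}`. -/
def onvec (s : Pat n) (p : Idx n) : Input n :=
  if s p.1 p.2 = 1 then N.nvec s p else -N.nvec s p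

/-- The gradient `∇_s = (W_{L+1} diag(s_L) ⋯ diag(s_1) W_1)ᵀ ∈ ℝ^{n_0}`. -/
def grad (h1 : n (L+1) = 1) (s : Pat n) : Input n :=
  N.nvec s ⟨L, Fin.cast h1.symm 0⟩

/-- The (real-valued) network function `f`. -/
def fnet (h1 : n (L+1) = 1) (x : Input n) : ℝ :=
  N.preact x L (Fin.cast h1.symm 0)

/-- The subjective network function `f̃_s`. -/
def sfnet (h1 : n (L+1) = 1) (s : Pat n) (x : Input n) : ℝ :=
  N.spreact s x L (Fin.cast h1.symm 0)

/-- The feasible directions `D̃_s(x)`. -/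
def Dfeas (s : Pat n) (x : Input n) : Set (Input n) :=
  {v | ∃ ε > 0, s ∈ N.SC (x + ε • v)}

/-- `x` is a regular point: for every compatible activation pattern `s ∈ S^C(x)`, the
normal vectors at the subjective critical indices are linearly independent. -/
def RegularPoint (x : Input n) : Prop :=
  ∀ s ∈ N.SC x, LinearIndependent ℝ
    (fun p : {p : Idx n // N.sCritical s x p} => N.nvec s p.1)

/-- The network is regular if every point is a regular point. -/
def Regular : Prop := ∀ x : Input n, N.RegularPoint x

/-- `w` is the feasible axis `ã_{x,s,l,j}` at `x` for the activation pattern `s` and the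
critical index `p = (l,j)`: it pairs to `1` with the oriented normal vector of `p` and
to `0` with the oriented normal vectors of all other critical indices of `x`. -/
def IsAxis (x : Input n) (s : Pat n) (p : Idx n) (w : Input n) : Prop :=
  ∀ q : Idx n, N.Critical x q → ⟪w, N.onvec s q⟫ = if p = q then 1 else 0

/-- The region separating axes `𝒜(x)`. -/
def RegionSepAxes (x : Input n) : Set (Input n) :=
  {w | ∃ s ∈ N.SC x, ∃ p : Idx n, N.Critical x p ∧ N.IsAxis x s p w}

/-!
Near `x` only critical neurons can change sign, and wherever a pattern `s` stays compatible the
pre-activations are the affine map `y ↦ A(x) + ⟪y - x, ṽ_s⟫`. A small step from `x` along the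
`s`-axis `w` of `p` keeps every critical neuron other than `p` at zero and pushes `p` to the side
prescribed by `s_p = s'_p`, so `s` and `s'` are both compatible there; comparing the two affine
descriptions gives `⟪w, ṽ_{s,q}⟫ = ⟪w, ṽ_{s',q}⟫` on `C(x)`, i.e. `w` is also an `s'`-axis. Two
axes for the same pattern differ by a vector orthogonal to every critical normal; moving along it
keeps all critical neurons at zero, so it lies in `Ker^C(x)`, which is trivial at a vertex.
-/

lemma relu_eq_mul_of_sign_compat {a σ : ℝ} (hσ : σ = 0 ∨ σ = 1)
    (h : Real.sign a * (σ - 1/2) ≥ 0) : max a 0 = σ * a := by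
  rcases hσ with rfl | rfl
  · rcases lt_trichotomy a 0 with ha | rfl | ha
    · simp [ha.le]
    · simp
    · rw [Real.sign_of_pos ha] at h; norm_num at h
  · rcases lt_trichotomy a 0 with ha | rfl | ha
    · rw [Real.sign_of_neg ha] at h; norm_num at h
    · simp
    · simp [ha.le]

lemma sign_compat_of_nonneg {a σ : ℝ} (h : 0 ≤ (2 * σ - 1) * a) :
    Real.sign a * (σ - 1/2) ≥ 0 := by
  rcases lt_trichotomy a 0 with ha | rfl | ha
  · rw [Real.sign_of_neg ha]; nlinarith
  · simp
  · rw [Real.sign_of_pos ha]; nlinarith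

lemma inner_onvec (s : Pat n) (q : Idx n) (hq : s q.1 q.2 = 0 ∨ s q.1 q.2 = 1)
    (v : Input n) : ⟪v, N.onvec s q⟫ = (2 * s q.1 q.2 - 1) * ⟪v, N.nvec s q⟫ := by
  rcases hq with h | h <;> norm_num [onvec, h, inner_neg_right]

lemma continuous_hid (k : ℕ) (i : Fin (n k)) : Continuous fun y : Input n => N.hid y k i := by
  induction k with
  | zero => exact (EuclideanSpace.proj i).continuous
  | succ k ih =>
    simp only [hid, Matrix.mulVec, dotProduct]
    fun_prop

lemma continuous_preact (k : ℕ) (j : Fin (n (k+1))) :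
    Continuous fun y : Input n => N.preact y k j := by
  simp only [preact, Matrix.mulVec, dotProduct]
  have := N.continuous_hid k
  fun_prop

lemma critical_iff {x : Input n} {q : Idx n} : N.Critical x q ↔
    q.1 < L ∧ ¬ ∀ᶠ y in 𝓝 x, N.Hpat y q.1 q.2 = N.Hpat x q.1 q.2 := by
  refine and_congr_right fun _ => ⟨fun h hev => ?_, fun h ε hε => ?_⟩
  · obtain ⟨ε, hε, hball⟩ := Metric.eventually_nhds_iff.mp hev
    obtain ⟨y, z, hy, hz, hne⟩ := h ε hε
    exact hne ((hball hy).trans (hball hz).symm)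
  · by_contra! hconst
    exact h (Metric.eventually_nhds_iff.mpr
      ⟨ε, hε, fun {y} hy => hconst y x hy (by simpa using hε)⟩)

lemma preact_eq_zero_of_critical {x : Input n} {q : Idx n} (h : N.Critical x q) :
    N.preact x q.1 q.2 = 0 := by
  by_contra hne
  refine (N.critical_iff.mp h).2 ?_
  have hcont := (N.continuous_preact q.1 q.2).continuousAt (x := x)
  rcases lt_or_gt_of_ne hne with hlt | hlt
  · filter_upwards [hcont.eventually (eventually_lt_nhds hlt)] with y hy
    rw [Hpat, Hpat, Real.sign_of_neg hy, Real.sign_of_neg hlt]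
  · filter_upwards [hcont.eventually (eventually_gt_nhds hlt)] with y hy
    rw [Hpat, Hpat, Real.sign_of_pos hy, Real.sign_of_pos hlt]

def HpatEqOffCritical (x y : Input n) : Prop :=
  ∀ q : Idx n, q.1 < L → ¬ N.Critical x q → N.Hpat y q.1 q.2 = N.Hpat x q.1 q.2

lemma eventually_hpat_eq_of_not_critical {x : Input n} {q : Idx n} (hq : q.1 < L)
    (hnc : ¬ N.Critical x q) : ∀ᶠ y in 𝓝 x, N.Hpat y q.1 q.2 = N.Hpat x q.1 q.2 := by
  by_contra h
  exact hnc (N.critical_iff.mpr ⟨hq, h⟩)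

lemma eventually_hpatEqOffCritical (x : Input n) : ∀ᶠ y in 𝓝 x, N.HpatEqOffCritical x y := by
  have hfin : {q : Idx n | q.1 < L ∧ ¬ N.Critical x q}.Finite :=
    ((Finset.range L).sigma fun _ => Finset.univ).finite_toSet.subset fun q hq => by
      simpa using hq.1
  filter_upwards [hfin.eventually_all.mpr fun q hq =>
    N.eventually_hpat_eq_of_not_critical hq.1 hq.2] with y hy q hq hnc
  exact hy q ⟨hq, hnc⟩

lemma exists_hpatEqOffCritical_add_smul (x v : Input n) :
    ∃ ε > 0, ∀ t : ℝ, |t| < ε → N.HpatEqOffCritical x (x + t • v) := by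
  have hcont : Tendsto (fun t : ℝ => x + t • v) (𝓝 0) (𝓝 x) := by
    have : Continuous fun t : ℝ => x + t • v := by fun_prop
    simpa using this.tendsto 0
  obtain ⟨ε, hε, h⟩ :=
    Metric.eventually_nhds_iff.mp (hcont.eventually (N.eventually_hpatEqOffCritical x))
  exact ⟨ε, hε, fun t ht => h (by rwa [Real.dist_0_eq_abs])⟩

lemma spreact_zero (s : Pat n) (y : Input n) :
    N.spreact s y 0 = (N.W 0).mulVec y.ofLp + N.b 0 := rfl

lemma spreact_succ (s : Pat n) (y : Input n) (k : ℕ) :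
    N.spreact s y (k+1) =
      (N.W (k+1)).mulVec ((Matrix.diagonal (s k)).mulVec (N.spreact s y k)) + N.b (k+1) := by
  ext j
  simp only [spreact, shid, Pi.add_apply]
  congr 2
  ext i
  rw [Matrix.mulVec_diagonal]
  rfl

lemma spreact_add (s : Pat n) (x v : Input n) (k : ℕ) :
    N.spreact s (x + v) k = N.spreact s x k + (N.sMat s k).mulVec v.ofLp := by
  induction k with
  | zero =>
    rw [spreact_zero, spreact_zero, WithLp.ofLp_add, Matrix.mulVec_add, sMat]
    abel
  | succ k ih =>
    rw [spreact_succ, spreact_succ, ih, sMat, Matrix.mulVec_add, Matrix.mulVec_add,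
      ← Matrix.mulVec_mulVec, ← Matrix.mulVec_mulVec]
    abel

lemma inner_nvec (s : Pat n) (v : Input n) (q : Idx n) :
    ⟪v, N.nvec s q⟫ = (N.sMat s q.1).mulVec v.ofLp q.2 := by
  simp only [PiLp.inner_apply, RCLike.inner_apply, starRingEnd_apply, star_trivial, nvec,
    Matrix.mulVec, dotProduct]

lemma inner_onvec_eq_zero_iff (s : Pat n) (q : Idx n) (v : Input n) :
    ⟪v, N.onvec s q⟫ = 0 ↔ ⟪v, N.nvec s q⟫ = 0 := by
  unfold onvec
  split_ifs <;> simp [inner_neg_right]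

lemma hid_eq_shid_of_compat {s : Pat n} {y : Input n} (hs : IsPattern L s) {k : ℕ} (hk : k ≤ L)
    (hcompat : ∀ k' < k, ∀ j, N.Hpat y k' j * (s k' j - 1/2) ≥ 0) :
    N.hid y k = N.shid s y k := by
  induction k with
  | zero => rfl
  | succ k ih =>
    have hhid := ih (by omega) fun k' hk' => hcompat k' (by omega)
    have hsign := hcompat k (lt_add_one k)
    simp only [Hpat, preact, hhid] at hsign
    ext j
    simp only [hid, shid, hhid]
    exact relu_eq_mul_of_sign_compat (hs k hk j) (hsign j)

lemma hid_eq_shid_of_mem_SC {s : Pat n} {y : Input n} (hs : s ∈ N.SC y) {k : ℕ} (hk : k ≤ L) :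
    N.hid y k = N.shid s y k :=
  N.hid_eq_shid_of_compat hs.1 hk fun k' hk' => hs.2 k' (by omega)

lemma preact_eq_add_inner {s : Pat n} {x y : Input n} {k : ℕ}
    (hx : N.hid x k = N.shid s x k) (hy : N.hid y k = N.shid s y k) (j : Fin (n (k+1))) :
    N.preact y k j = N.preact x k j + ⟪y - x, N.nvec s ⟨k, j⟩⟫ := by
  have h := congrFun (N.spreact_add s x (y - x) k) j
  rw [add_sub_cancel] at h
  simp only [preact, hx, hy, inner_nvec]
  exact h

lemma preact_eq_inner_of_critical {s : Pat n} {x y : Input n} (hsx : s ∈ N.SC x)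
    (hsy : s ∈ N.SC y) {q : Idx n} (hq : N.Critical x q) :
    N.preact y q.1 q.2 = ⟪y - x, N.nvec s q⟫ := by
  rw [N.preact_eq_add_inner (N.hid_eq_shid_of_mem_SC hsx hq.1.le)
    (N.hid_eq_shid_of_mem_SC hsy hq.1.le), N.preact_eq_zero_of_critical hq, zero_add]

lemma mem_SC_of_critical_compat {s : Pat n} {x y : Input n} (hs : s ∈ N.SC x)
    (hxy : N.HpatEqOffCritical x y)
    (hcrit : ∀ q, N.Critical x q → N.Hpat y q.1 q.2 * (s q.1 q.2 - 1/2) ≥ 0) :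
    s ∈ N.SC y := by
  refine ⟨hs.1, fun k hk j => ?_⟩
  by_cases hc : N.Critical x ⟨k, j⟩
  · exact hcrit _ hc
  · rw [hxy ⟨k, j⟩ hk hc]
    exact hs.2 k hk j

lemma mem_SC_of_inner_onvec_nonneg {s : Pat n} {x y : Input n} (hs : s ∈ N.SC x)
    (hxy : N.HpatEqOffCritical x y)
    (hcone : ∀ q, N.Critical x q → 0 ≤ ⟪y - x, N.onvec s q⟫) :
    s ∈ N.SC y := by
  refine ⟨hs.1, fun k => ?_⟩
  induction k using Nat.strong_induction_on with
  | _ k ih =>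
    intro hk j
    by_cases hc : N.Critical x ⟨k, j⟩
    · have hhid := N.hid_eq_shid_of_compat hs.1 hk.le fun k' hk' => ih k' hk' (hk'.trans hk)
      rw [Hpat, N.preact_eq_add_inner (N.hid_eq_shid_of_mem_SC hs hk.le) hhid,
        N.preact_eq_zero_of_critical hc, zero_add]
      apply sign_compat_of_nonneg
      rw [← N.inner_onvec s ⟨k, j⟩ (hs.1 k hk j)]
      exact hcone _ hc
    · rw [hxy ⟨k, j⟩ hk hc]
      exact hs.2 k hk j

lemma inner_nvec_eq_of_mem_SC {s s' : Pat n} {x y : Input n} (hsx : s ∈ N.SC x)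
    (hsy : s ∈ N.SC y) (hs'x : s' ∈ N.SC x) (hs'y : s' ∈ N.SC y) {q : Idx n} (hq : q.1 < L) :
    ⟪y - x, N.nvec s q⟫ = ⟪y - x, N.nvec s' q⟫ := by
  have h := N.preact_eq_add_inner (N.hid_eq_shid_of_mem_SC hsx hq.le)
    (N.hid_eq_shid_of_mem_SC hsy hq.le) q.2
  have h' := N.preact_eq_add_inner (N.hid_eq_shid_of_mem_SC hs'x hq.le)
    (N.hid_eq_shid_of_mem_SC hs'y hq.le) q.2
  exact add_left_cancel (h.symm.trans h')

lemma eq_zero_of_inner_nvec_eq_zero {s : Pat n} {x u : Input n} (hvx : N.IsVertex x)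
    (hs : s ∈ N.SC x) (hu : ∀ q, N.Critical x q → ⟪u, N.nvec s q⟫ = 0) : u = 0 := by
  have hker : u ∈ N.KerC x := by
    obtain ⟨ε, hε, hstable⟩ := N.exists_hpatEqOffCritical_add_smul x u
    refine ⟨ε, hε, fun t ht q hq => ?_⟩
    have hyx : x + t • u - x = t • u := add_sub_cancel_left _ _
    by_cases hc : N.Critical x q
    · have hcone : ∀ q', N.Critical x q' → 0 ≤ ⟪x + t • u - x, N.onvec s q'⟫ := fun q' hq' => by
        rw [hyx, real_inner_smul_left, (N.inner_onvec_eq_zero_iff s q' u).mpr (hu q' hq'),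
          mul_zero]
      have hsy := N.mem_SC_of_inner_onvec_nonneg hs (hstable t ht) hcone
      rw [Hpat, Hpat, N.preact_eq_inner_of_critical hs hsy hc, N.preact_eq_zero_of_critical hc,
        hyx, real_inner_smul_left, hu q hc, mul_zero]
    · exact hstable t ht q hq hc
  have hspan : Submodule.span ℝ (N.KerC x) = ⊥ := Submodule.finrank_eq_zero.mp hvx
  simpa [hspan] using Submodule.subset_span (R := ℝ) hker

lemma isAxis_of_mem_SC {s s' : Pat n} {x : Input n} {p : Idx n} {w : Input n}
    (hs : s ∈ N.SC x) (hs' : s' ∈ N.SC x) (hss' : s p.1 p.2 = s' p.1 p.2)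
    (hw : N.IsAxis x s p w) : N.IsAxis x s' p w := by
  -- `s` and `s'` orient `p` alike, and off `p` the pairing vanishes whatever the orientation.
  have horient : ∀ q, N.Critical x q →
      (2 * s' q.1 q.2 - 1) * ⟪w, N.nvec s q⟫ = if p = q then 1 else 0 := by
    intro q hq
    rw [← hw q hq]
    by_cases hpq : p = q
    · subst hpq
      rw [N.inner_onvec s p (hs.1 p.1 hq.1 p.2), hss']
    · have h0 := hw q hq
      rw [if_neg hpq] at h0
      rw [h0, (N.inner_onvec_eq_zero_iff s q w).mp h0, mul_zero]
  obtain ⟨ε, hε, hstable⟩ := N.exists_hpatEqOffCritical_add_smul x w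
  set y := x + (ε / 2) • w
  have hyx : y - x = (ε / 2) • w := add_sub_cancel_left _ _
  have hy : N.HpatEqOffCritical x y := hstable _ (by rw [abs_of_pos (by positivity)]; linarith)
  have hsy : s ∈ N.SC y := N.mem_SC_of_inner_onvec_nonneg hs hy fun q hq => by
    rw [hyx, real_inner_smul_left, hw q hq]
    split_ifs <;> positivity
  have hs'y : s' ∈ N.SC y := N.mem_SC_of_critical_compat hs' hy fun q hq => by
    rw [Hpat, N.preact_eq_inner_of_critical hs hsy hq]
    apply sign_compat_of_nonneg
    rw [hyx, real_inner_smul_left, mul_left_comm, horient q hq]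
    split_ifs <;> positivity
  intro q hq
  have hnvec := N.inner_nvec_eq_of_mem_SC hs hsy hs' hs'y hq.1
  rw [hyx, real_inner_smul_left, real_inner_smul_left] at hnvec
  rw [N.inner_onvec s' q (hs'.1 q.1 hq.1 q.2), ← mul_left_cancel₀ (by positivity) hnvec,
    horient q hq]

lemma eq_of_isAxis {s : Pat n} {x : Input n} {p : Idx n} {w w' : Input n} (hvx : N.IsVertex x)
    (hs : s ∈ N.SC x) (hw : N.IsAxis x s p w) (hw' : N.IsAxis x s p w') : w = w' :=
  sub_eq_zero.mp <| N.eq_zero_of_inner_nvec_eq_zero hvx hs fun q hq =>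
    (N.inner_onvec_eq_zero_iff s q _).mp <| by rw [inner_sub_left, hw q hq, hw' q hq, sub_self]

end Net

theorem statement15_general {L : ℕ} {n : ℕ → ℕ} (N : Net L n) (x : Input n)
    (hvx : N.IsVertex x) (p : Idx n)
    (s s' : Pat n) (hs : s ∈ N.SC x) (hs' : s' ∈ N.SC x) (hss' : s p.1 p.2 = s' p.1 p.2)
    (w w' : Input n) (hw : N.IsAxis x s p w) (hw' : N.IsAxis x s' p w') :
    w = w' :=
  N.eq_of_isAxis hvx hs' (N.isAxis_of_mem_SC hs hs' hss' hw) hw'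

/-- Theorem 3: let `x` be a regular vertex, `(l,j) ∈ C(x)` and
`s, s' ∈ S^C(x)` with `s_{lj} = s'_{lj}`. Then the corresponding feasible axes coincide:
`ã_{x,s,l,j} = ã_{x,s',l,j}`. -/
theorem statement15 {L : ℕ} {n : ℕ → ℕ} (N : Net L n) (x : Input n)
    (hreg : N.RegularPoint x) (hvx : N.IsVertex x) (p : Idx n) (hp : N.Critical x p)
    (s s' : Pat n) (hs : s ∈ N.SC x) (hs' : s' ∈ N.SC x) (hss' : s p.1 p.2 = s' p.1 p.2)
    (w w' : Input n) (hw : N.IsAxis x s p w) (hw' : N.IsAxis x s' p w') :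
    w = w' :=
  statement15_general N x hvx p s s' hs hs' hss' w w' hw hw'

end DRLP
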